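/- arXiv:1303.6495 — 5 statements merged into one kernel-verified Lean document; each statement's English description precedes it below -/
import Mathlib

section
/- For all z in the upper half-plane, θ_{00}(z)^4 = θ_{01}(z)^4 + θ_{10}(z)^4 (Jacobi's identity), where the three theta constants are as defined. -/
set_option maxHeartbeats 1000000

open Complex

/-- The Jacobi theta constant `θ₀₀(z) = ∑_{n ∈ ℤ} exp(π i n² z)`. -/
noncomputable def theta00 (z : ℂ) : ℂ := ∑' n : ℤ, Complex.exp (Real.pi * I * n ^ 2 * z)

/-- The Jacobi theta constant `θ₁₀(z) = ∑_{n ∈ ℤ} exp(π i (n + 1/2)² z)`. -/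
noncomputable def theta10 (z : ℂ) : ℂ :=
  ∑' n : ℤ, Complex.exp (Real.pi * I * ((n : ℂ) + 1 / 2) ^ 2 * z)

/-- The Jacobi theta constant `θ₀₁(z) = ∑_{n ∈ ℤ} (-1)^n exp(π i n² z)`. -/
noncomputable def theta01 (z : ℂ) : ℂ :=
  ∑' n : ℤ, (-1 : ℂ) ^ n * Complex.exp (Real.pi * I * n ^ 2 * z)

namespace JacobiAux

open Real in
lemma summable00 {w : ℂ} (hw : 0 < w.im) :
    Summable fun n : ℤ => Complex.exp (π * I * n ^ 2 * w) := by
  have h := (summable_jacobiTheta₂_term_iff 0 w).mpr hw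
  refine h.congr fun n => ?_
  simp [jacobiTheta₂_term]

open Real in
lemma summable10 {w : ℂ} (hw : 0 < w.im) :
    Summable fun n : ℤ => Complex.exp (π * I * ((n : ℂ) + 1 / 2) ^ 2 * w) := by
  have h := ((summable_jacobiTheta₂_term_iff (w / 2) w).mpr hw).mul_left
    (Complex.exp (π * I * w / 4))
  refine h.congr fun n => ?_
  rw [jacobiTheta₂_term, ← Complex.exp_add]
  congr 1
  ring

open Real in
lemma summable01 {w : ℂ} (hw : 0 < w.im) :
    Summable fun n : ℤ => (-1 : ℂ) ^ n * Complex.exp (π * I * n ^ 2 * w) := by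
  have h := (summable_jacobiTheta₂_term_iff (1 / 2 : ℂ) w).mpr hw
  refine h.congr fun n => ?_
  rw [jacobiTheta₂_term, Complex.exp_add]
  congr 1
  have : 2 * (π : ℂ) * I * n * (1 / 2) = n * (π * I) := by ring
  rw [this, Complex.exp_int_mul, Complex.exp_pi_mul_I]

def s1 : Set (ℤ × ℤ) := {p | (p.1 + p.2) % 2 = 0}
def s2 : Set (ℤ × ℤ) := {p | (p.1 - p.2) % 2 = 0}

def f1a : ℤ × ℤ → ↥s1 := fun p =>
  ⟨(p.1 + p.2, p.1 - p.2), by simp only [s1, Set.mem_setOf_eq]; omega⟩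
def f1b : ℤ × ℤ → ↥s1ᶜ := fun p =>
  ⟨(p.1 + p.2 + 1, p.1 - p.2), by simp only [s1, Set.mem_compl_iff, Set.mem_setOf_eq]; omega⟩
def f2a : ℤ × ℤ → ↥s2 := fun p =>
  ⟨(p.1 + p.2, p.1 - p.2), by simp only [s2, Set.mem_setOf_eq]; omega⟩
def f2b : ℤ × ℤ → ↥s2ᶜ := fun p =>
  ⟨(p.1 + p.2, p.1 - p.2 - 1), by simp only [s2, Set.mem_compl_iff, Set.mem_setOf_eq]; omega⟩

lemma bij_f1a : Function.Bijective f1a := by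
  constructor
  · rintro ⟨a, b⟩ ⟨c, d⟩ h
    simp only [f1a, Subtype.mk.injEq, Prod.mk.injEq] at h
    simp only [Prod.mk.injEq]
    omega
  · rintro ⟨⟨m, n⟩, hmn⟩
    simp only [s1, Set.mem_setOf_eq] at hmn
    exact ⟨((m + n) / 2, (m - n) / 2), by simp only [f1a, Subtype.mk.injEq, Prod.mk.injEq]; omega⟩

lemma bij_f1b : Function.Bijective f1b := by
  constructor
  · rintro ⟨a, b⟩ ⟨c, d⟩ h
    simp only [f1b, Subtype.mk.injEq, Prod.mk.injEq] at h
    simp only [Prod.mk.injEq]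
    omega
  · rintro ⟨⟨m, n⟩, hmn⟩
    simp only [s1, Set.mem_compl_iff, Set.mem_setOf_eq] at hmn
    exact ⟨((m + n - 1) / 2, (m - n - 1) / 2), by
      simp only [f1b, Subtype.mk.injEq, Prod.mk.injEq]; omega⟩

lemma bij_f2a : Function.Bijective f2a := by
  constructor
  · rintro ⟨a, b⟩ ⟨c, d⟩ h
    simp only [f2a, Subtype.mk.injEq, Prod.mk.injEq] at h
    simp only [Prod.mk.injEq]
    omega
  · rintro ⟨⟨m, n⟩, hmn⟩
    simp only [s2, Set.mem_setOf_eq] at hmn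
    exact ⟨((m + n) / 2, (m - n) / 2), by simp only [f2a, Subtype.mk.injEq, Prod.mk.injEq]; omega⟩

lemma bij_f2b : Function.Bijective f2b := by
  constructor
  · rintro ⟨a, b⟩ ⟨c, d⟩ h
    simp only [f2b, Subtype.mk.injEq, Prod.mk.injEq] at h
    simp only [Prod.mk.injEq]
    omega
  · rintro ⟨⟨m, n⟩, hmn⟩
    simp only [s2, Set.mem_compl_iff, Set.mem_setOf_eq] at hmn
    exact ⟨((m + n + 1) / 2, (m - n - 1) / 2), by
      simp only [f2b, Subtype.mk.injEq, Prod.mk.injEq]; omega⟩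

/-- Split a sum over `ℤ × ℤ` according to the parity of `m + n`. -/
lemma split1 (F : ℤ × ℤ → ℂ) (hF : Summable F) :
    ∑' p : ℤ × ℤ, F p = (∑' p : ℤ × ℤ, F (p.1 + p.2, p.1 - p.2))
      + ∑' p : ℤ × ℤ, F (p.1 + p.2 + 1, p.1 - p.2) := by
  rw [← Summable.tsum_add_tsum_compl (s := s1) (hF.subtype s1) (hF.subtype s1ᶜ)]
  congr 1
  · exact ((Equiv.ofBijective f1a bij_f1a).tsum_eq fun q : s1 => F q).symm
  · exact ((Equiv.ofBijective f1b bij_f1b).tsum_eq fun q : ↥s1ᶜ => F q).symm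

/-- Split a sum over `ℤ × ℤ` according to the parity of `m - n`. -/
lemma split2 (F : ℤ × ℤ → ℂ) (hF : Summable F) :
    ∑' p : ℤ × ℤ, F p = (∑' p : ℤ × ℤ, F (p.1 + p.2, p.1 - p.2))
      + ∑' p : ℤ × ℤ, F (p.1 + p.2, p.1 - p.2 - 1) := by
  rw [← Summable.tsum_add_tsum_compl (s := s2) (hF.subtype s2) (hF.subtype s2ᶜ)]
  congr 1
  · exact ((Equiv.ofBijective f2a bij_f2a).tsum_eq fun q : s2 => F q).symm
  · exact ((Equiv.ofBijective f2b bij_f2b).tsum_eq fun q : ↥s2ᶜ => F q).symm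

open Real

lemma norm00 {w : ℂ} (hw : 0 < w.im) :
    Summable fun n : ℤ => ‖Complex.exp (π * I * n ^ 2 * w)‖ :=
  summable_norm_iff.mpr (summable00 hw)

lemma norm10 {w : ℂ} (hw : 0 < w.im) :
    Summable fun n : ℤ => ‖Complex.exp (π * I * ((n : ℂ) + 1 / 2) ^ 2 * w)‖ :=
  summable_norm_iff.mpr (summable10 hw)

lemma norm01 {w : ℂ} (hw : 0 < w.im) :
    Summable fun n : ℤ => ‖(-1 : ℂ) ^ n * Complex.exp (π * I * n ^ 2 * w)‖ :=
  summable_norm_iff.mpr (summable01 hw)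

lemma im2 {z : ℂ} (hz : 0 < z.im) : 0 < (2 * z).im := by
  simp only [Complex.mul_im, Complex.re_ofNat, Complex.im_ofNat]
  linarith

/-- θ₀₀(z)² = θ₀₀(2z)² + θ₁₀(2z)². -/
lemma relA {z : ℂ} (hz : 0 < z.im) :
    theta00 z ^ 2 = theta00 (2 * z) ^ 2 + theta10 (2 * z) ^ 2 := by
  have h2 := im2 hz
  have hF : Summable fun p : ℤ × ℤ =>
      Complex.exp (π * I * (p.1 : ℂ) ^ 2 * z) * Complex.exp (π * I * (p.2 : ℂ) ^ 2 * z) :=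
    summable_mul_of_summable_norm (R := ℂ)
      (f := fun n : ℤ => Complex.exp (π * I * n ^ 2 * z))
      (g := fun n : ℤ => Complex.exp (π * I * n ^ 2 * z)) (norm00 hz) (norm00 hz)
  calc theta00 z ^ 2
      = ∑' p : ℤ × ℤ,
          Complex.exp (π * I * (p.1 : ℂ) ^ 2 * z) * Complex.exp (π * I * (p.2 : ℂ) ^ 2 * z) := by
        rw [theta00, sq, tsum_mul_tsum_of_summable_norm (norm00 hz) (norm00 hz)]
    _ = (∑' p : ℤ × ℤ, Complex.exp (π * I * (p.1 : ℂ) ^ 2 * (2 * z))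
            * Complex.exp (π * I * (p.2 : ℂ) ^ 2 * (2 * z)))
        + ∑' p : ℤ × ℤ, Complex.exp (π * I * ((p.1 : ℂ) + 1 / 2) ^ 2 * (2 * z))
            * Complex.exp (π * I * ((p.2 : ℂ) + 1 / 2) ^ 2 * (2 * z)) := by
        rw [split1 _ hF]
        congr 1
        · refine tsum_congr fun p => ?_
          rw [← Complex.exp_add, ← Complex.exp_add]
          congr 1
          push_cast
          ring
        · refine tsum_congr fun p => ?_
          rw [← Complex.exp_add, ← Complex.exp_add]
          congr 1
          push_cast
          ring
    _ = theta00 (2 * z) ^ 2 + theta10 (2 * z) ^ 2 := by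
        rw [theta00, theta10, sq, sq,
          tsum_mul_tsum_of_summable_norm (norm00 h2) (norm00 h2),
          tsum_mul_tsum_of_summable_norm (norm10 h2) (norm10 h2)]

/-- θ₀₁(z)² = θ₀₀(2z)² - θ₁₀(2z)². -/
lemma relB {z : ℂ} (hz : 0 < z.im) :
    theta01 z ^ 2 = theta00 (2 * z) ^ 2 - theta10 (2 * z) ^ 2 := by
  have h2 := im2 hz
  have hF : Summable fun p : ℤ × ℤ =>
      ((-1 : ℂ) ^ p.1 * Complex.exp (π * I * (p.1 : ℂ) ^ 2 * z))
        * ((-1 : ℂ) ^ p.2 * Complex.exp (π * I * (p.2 : ℂ) ^ 2 * z)) :=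
    summable_mul_of_summable_norm (R := ℂ)
      (f := fun n : ℤ => (-1 : ℂ) ^ n * Complex.exp (π * I * n ^ 2 * z))
      (g := fun n : ℤ => (-1 : ℂ) ^ n * Complex.exp (π * I * n ^ 2 * z))
      (norm01 hz) (norm01 hz)
  have hne : (-1 : ℂ) ≠ 0 := by norm_num
  calc theta01 z ^ 2
      = ∑' p : ℤ × ℤ,
          ((-1 : ℂ) ^ p.1 * Complex.exp (π * I * (p.1 : ℂ) ^ 2 * z))
            * ((-1 : ℂ) ^ p.2 * Complex.exp (π * I * (p.2 : ℂ) ^ 2 * z)) := by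
        rw [theta01, sq, tsum_mul_tsum_of_summable_norm (norm01 hz) (norm01 hz)]
    _ = (∑' p : ℤ × ℤ, Complex.exp (π * I * (p.1 : ℂ) ^ 2 * (2 * z))
            * Complex.exp (π * I * (p.2 : ℂ) ^ 2 * (2 * z)))
        + ∑' p : ℤ × ℤ, -(Complex.exp (π * I * ((p.1 : ℂ) + 1 / 2) ^ 2 * (2 * z))
            * Complex.exp (π * I * ((p.2 : ℂ) + 1 / 2) ^ 2 * (2 * z))) := by
        rw [split1 _ hF]
        congr 1
        · refine tsum_congr fun p => ?_
          have hsgn : ((-1 : ℂ)) ^ (p.1 + p.2) * (-1 : ℂ) ^ (p.1 - p.2) = 1 := by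
            rw [← zpow_add₀ hne]
            exact Even.neg_one_zpow ⟨p.1, by ring⟩
          rw [mul_mul_mul_comm, hsgn, one_mul, ← Complex.exp_add, ← Complex.exp_add]
          congr 1
          push_cast
          ring
        · refine tsum_congr fun p => ?_
          have hsgn : ((-1 : ℂ)) ^ (p.1 + p.2 + 1) * (-1 : ℂ) ^ (p.1 - p.2) = -1 := by
            rw [← zpow_add₀ hne]
            exact Odd.neg_one_zpow ⟨p.1, by ring⟩
          rw [mul_mul_mul_comm, hsgn, neg_one_mul, ← Complex.exp_add, ← Complex.exp_add]
          congr 2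
          push_cast
          ring
    _ = theta00 (2 * z) ^ 2 - theta10 (2 * z) ^ 2 := by
        rw [tsum_neg, theta00, theta10, sq, sq,
          tsum_mul_tsum_of_summable_norm (norm00 h2) (norm00 h2),
          tsum_mul_tsum_of_summable_norm (norm10 h2) (norm10 h2)]
        ring

/-- θ₁₀(z)² = 2 θ₀₀(2z) θ₁₀(2z). -/
lemma relC {z : ℂ} (hz : 0 < z.im) :
    theta10 z ^ 2 = 2 * theta00 (2 * z) * theta10 (2 * z) := by
  have h2 := im2 hz
  have hF : Summable fun p : ℤ × ℤ =>
      Complex.exp (π * I * ((p.1 : ℂ) + 1 / 2) ^ 2 * z)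
        * Complex.exp (π * I * ((p.2 : ℂ) + 1 / 2) ^ 2 * z) :=
    summable_mul_of_summable_norm (R := ℂ)
      (f := fun n : ℤ => Complex.exp (π * I * ((n : ℂ) + 1 / 2) ^ 2 * z))
      (g := fun n : ℤ => Complex.exp (π * I * ((n : ℂ) + 1 / 2) ^ 2 * z))
      (norm10 hz) (norm10 hz)
  calc theta10 z ^ 2
      = ∑' p : ℤ × ℤ, Complex.exp (π * I * ((p.1 : ℂ) + 1 / 2) ^ 2 * z)
          * Complex.exp (π * I * ((p.2 : ℂ) + 1 / 2) ^ 2 * z) := by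
        rw [theta10, sq, tsum_mul_tsum_of_summable_norm (norm10 hz) (norm10 hz)]
    _ = (∑' p : ℤ × ℤ, Complex.exp (π * I * ((p.1 : ℂ) + 1 / 2) ^ 2 * (2 * z))
            * Complex.exp (π * I * (p.2 : ℂ) ^ 2 * (2 * z)))
        + ∑' p : ℤ × ℤ, Complex.exp (π * I * (p.1 : ℂ) ^ 2 * (2 * z))
            * Complex.exp (π * I * ((p.2 : ℂ) + 1 / 2) ^ 2 * (2 * z)) := by
        rw [split2 _ hF]
        congr 1
        · refine tsum_congr fun p => ?_
          rw [← Complex.exp_add, ← Complex.exp_add]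
          congr 1
          push_cast
          ring
        · refine tsum_congr fun p => ?_
          rw [← Complex.exp_add, ← Complex.exp_add]
          congr 1
          push_cast
          ring
    _ = 2 * theta00 (2 * z) * theta10 (2 * z) := by
        rw [theta00, theta10, ← tsum_mul_tsum_of_summable_norm (norm10 h2) (norm00 h2),
          ← tsum_mul_tsum_of_summable_norm (norm00 h2) (norm10 h2)]
        ring

end JacobiAux

theorem jacobi_identity (z : ℂ) (hz : 0 < z.im) :
    theta00 z ^ 4 = theta01 z ^ 4 + theta10 z ^ 4 := by
  have hA := JacobiAux.relA hz
  have hB := JacobiAux.relB hz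
  have hC := JacobiAux.relC hz
  calc theta00 z ^ 4 = (theta00 z ^ 2) ^ 2 := by ring
    _ = (theta00 (2 * z) ^ 2 + theta10 (2 * z) ^ 2) ^ 2 := by rw [hA]
    _ = (theta00 (2 * z) ^ 2 - theta10 (2 * z) ^ 2) ^ 2
        + (2 * theta00 (2 * z) * theta10 (2 * z)) ^ 2 := by ring
    _ = (theta01 z ^ 2) ^ 2 + (theta10 z ^ 2) ^ 2 := by rw [hB, hC]
    _ = theta01 z ^ 4 + theta10 z ^ 4 := by ring
end

section
/- Let Γ'[4] be the set of matrices M = (a b; c d) in SL(2,ℤ) with a ≡ d ≡ 1 mod 4, b ≡ c ≡ 0 mod 4, and a + b + c ≡ 1 mod 8. Then Γ'[4] is a subgroup of Γ[4] of index 2. -/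
/-!
Writing `M ∈ Γ(4)` as `1 + 4X`, any linear form `ℓ` with `ℓ 1 = 1` satisfies
`ℓ (MN) ≡ ℓ M ℓ N [ZMOD 16]`, because `(1 + 4X)(1 + 4Y) = 1 + 4X + 4Y + 16XY`. For
`ℓ = a + b + c` this makes `M ↦ a + b + c mod 8` a character `Γ(4) → (ℤ/8)ˣ` with values
`1 + 4ℓ(X) ∈ {1, 5}`, and `T⁴` takes the value `5`. Its kernel is `Γ'(4)`, of index `|{1, 5}| = 2`.
-/

open CongruenceSubgroup Matrix.SpecialLinearGroup

/-- The set `Γ'[4]` of matrices in `Γ[4]` with `a + b + c ≡ 1 mod 8`. -/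
def GammaPrime4 : Set (Matrix.SpecialLinearGroup (Fin 2) ℤ) :=
  {M | M ∈ Gamma 4 ∧ ((M 0 0 + M 0 1 + M 1 0 : ℤ) : ZMod 8) = 1}

open scoped MatrixGroups

theorem linearMap_one_add_smul_mul_modEq {ι : Type*} [Fintype ι] [DecidableEq ι]
    (ℓ : Matrix ι ι ℤ →ₗ[ℤ] ℤ) (hℓ : ℓ 1 = 1) (n : ℤ) (X Y : Matrix ι ι ℤ) :
    ℓ ((1 + n • X) * (1 + n • Y)) ≡ ℓ (1 + n • X) * ℓ (1 + n • Y) [ZMOD n ^ 2] := by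
  have hprod : (1 + n • X) * (1 + n • Y) = 1 + n • X + n • Y + n ^ 2 • (X * Y) := by
    simp only [mul_add, add_mul, one_mul, mul_one, smul_mul_smul_comm, sq]
    abel
  refine Int.modEq_iff_dvd.mpr ⟨ℓ X * ℓ Y - ℓ (X * Y), ?_⟩
  simp only [hprod, map_add, map_smul, hℓ, smul_eq_mul]
  ring

theorem exists_eq_one_add_smul_of_mem_Gamma {N : ℕ} {γ : SL(2, ℤ)} (hγ : γ ∈ Gamma N) :
    ∃ X : Matrix (Fin 2) (Fin 2) ℤ, (γ : Matrix (Fin 2) (Fin 2) ℤ) = 1 + (N : ℤ) • X := by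
  have hdvd : ∀ i j, (N : ℤ) ∣ γ i j - (1 : Matrix (Fin 2) (Fin 2) ℤ) i j := fun i j => by
    rw [← ZMod.intCast_eq_intCast_iff_dvd_sub]
    have := congrArg (fun g : SL(2, ZMod N) => g i j) (Gamma_mem'.mp hγ)
    simpa [Matrix.one_apply, apply_ite] using this.symm
  choose X hX using hdvd
  exact ⟨Matrix.of X, by ext i j; simp [← hX]⟩

def cornerSum : Matrix (Fin 2) (Fin 2) ℤ →ₗ[ℤ] ℤ :=
  Matrix.entryLinearMap ℤ ℤ 0 0 + Matrix.entryLinearMap ℤ ℤ 0 1 + Matrix.entryLinearMap ℤ ℤ 1 0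

@[simp]
theorem cornerSum_apply (M : Matrix (Fin 2) (Fin 2) ℤ) : cornerSum M = M 0 0 + M 0 1 + M 1 0 :=
  rfl

theorem cornerSum_one : cornerSum 1 = 1 := by simp

def cornerSumModEight : Gamma 4 →* ZMod 8 where
  toFun γ := (cornerSum (γ : Matrix (Fin 2) (Fin 2) ℤ) : ZMod 8)
  map_one' := by simp
  map_mul' γ δ := by
    obtain ⟨X, hX⟩ := exists_eq_one_add_smul_of_mem_Gamma γ.2
    obtain ⟨Y, hY⟩ := exists_eq_one_add_smul_of_mem_Gamma δ.2
    have h16 := linearMap_one_add_smul_mul_modEq cornerSum cornerSum_one 4 X Y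
    rw [← Int.cast_mul, ZMod.intCast_eq_intCast_iff]
    simpa [hX, hY] using h16.of_dvd (by norm_num : (8 : ℤ) ∣ 4 ^ 2)

theorem cornerSumModEight_apply (γ : Gamma 4) :
    cornerSumModEight γ = (cornerSum (γ : Matrix (Fin 2) (Fin 2) ℤ) : ZMod 8) :=
  rfl

theorem cornerSumModEight_eq_one_or_five (γ : Gamma 4) :
    cornerSumModEight γ = 1 ∨ cornerSumModEight γ = 5 := by
  obtain ⟨X, hX⟩ := exists_eq_one_add_smul_of_mem_Gamma γ.2
  have hvalues : ∀ k : ZMod 8, 1 + 4 * k = 1 ∨ 1 + 4 * k = 5 := by decide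
  rw [cornerSumModEight_apply, hX, map_add, map_smul, cornerSum_one, smul_eq_mul]
  exact_mod_cast hvalues (cornerSum X)

theorem cornerSumModEight_T_pow_four :
    cornerSumModEight ⟨ModularGroup.T ^ (4 : ℤ), ModularGroup_T_pow_mem_Gamma 4 4 dvd_rfl⟩ = 5 := by
  rw [cornerSumModEight_apply, ModularGroup.coe_T_zpow]
  decide

def gammaFourCharacter : Gamma 4 →* (ZMod 8)ˣ :=
  cornerSumModEight.toHomUnits

def unitFive : (ZMod 8)ˣ :=
  ⟨5, 5, by decide, by decide⟩

theorem orderOf_unitFive : orderOf unitFive = 2 :=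
  orderOf_eq_prime (by decide) (by decide)

theorem range_gammaFourCharacter : gammaFourCharacter.range = Subgroup.zpowers unitFive := by
  refine le_antisymm ?_ <| Subgroup.zpowers_le.mpr ⟨_, Units.ext cornerSumModEight_T_pow_four⟩
  rintro _ ⟨γ, rfl⟩
  rcases cornerSumModEight_eq_one_or_five γ with h | h
  · rw [show gammaFourCharacter γ = 1 from Units.ext h]
    exact one_mem _
  · rw [show gammaFourCharacter γ = unitFive from Units.ext h]
    exact Subgroup.mem_zpowers _

theorem index_ker_gammaFourCharacter : gammaFourCharacter.ker.index = 2 := by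
  rw [Subgroup.index_ker, range_gammaFourCharacter, Nat.card_zpowers, orderOf_unitFive]

theorem gammaPrime4_subgroup_index_two :
    ∃ H : Subgroup (Matrix.SpecialLinearGroup (Fin 2) ℤ),
      (H : Set _) = GammaPrime4 ∧ H ≤ Gamma 4 ∧ H.relIndex (Gamma 4) = 2 := by
  refine ⟨gammaFourCharacter.ker.map (Gamma 4).subtype, ?_, Subgroup.map_subtype_le _, ?_⟩
  · ext γ
    simp [GammaPrime4, gammaFourCharacter, cornerSumModEight_apply, and_comm]
  · rw [Subgroup.relIndex, Subgroup.subgroupOf, Subgroup.comap_map_eq_self_of_injective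
      (Gamma 4).subtype_injective, index_ker_gammaFourCharacter]
end

section
/- There is no matrix N = (a b; c d) in SL(2,ℤ) with a ≡ d ≡ 1 mod 8, b ≡ c ≡ 4 mod 8, and |a + d| ≤ 2. (Equivalently: a matrix congruent to (1 4; 4 1) mod 8 in SL(2,ℤ) cannot have trace of absolute value at most 2.) -/
theorem no_small_trace_matrix_1441 :
    ¬ ∃ a b c d : ℤ, a * d - b * c = 1 ∧ (a : ZMod 8) = 1 ∧ (d : ZMod 8) = 1 ∧
      (b : ZMod 8) = 4 ∧ (c : ZMod 8) = 4 ∧ |a + d| ≤ 2 := by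
  rintro ⟨a, b, c, d, hdet, ha, hd, hb, hc, htr⟩
  have ha' : (8 : ℤ) ∣ a - 1 := by
    have : ((a - 1 : ℤ) : ZMod 8) = 0 := by push_cast [ha]; ring
    exact_mod_cast (ZMod.intCast_zmod_eq_zero_iff_dvd _ 8).mp this
  have hd' : (8 : ℤ) ∣ d - 1 := by
    have : ((d - 1 : ℤ) : ZMod 8) = 0 := by push_cast [hd]; ring
    exact_mod_cast (ZMod.intCast_zmod_eq_zero_iff_dvd _ 8).mp this
  have hb' : (8 : ℤ) ∣ b - 4 := by
    have : ((b - 4 : ℤ) : ZMod 8) = 0 := by push_cast [hb]; ring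
    exact_mod_cast (ZMod.intCast_zmod_eq_zero_iff_dvd _ 8).mp this
  have hc' : (8 : ℤ) ∣ c - 4 := by
    have : ((c - 4 : ℤ) : ZMod 8) = 0 := by push_cast [hc]; ring
    exact_mod_cast (ZMod.intCast_zmod_eq_zero_iff_dvd _ 8).mp this
  obtain ⟨α, hα⟩ := ha'
  obtain ⟨δ, hδ⟩ := hd'
  obtain ⟨β, hβ⟩ := hb'
  obtain ⟨γ, hγ⟩ := hc'
  have habs := abs_le.mp htr
  have hsum : a + d = 2 := by omega
  have hδα : δ = -α := by omega
  have ha2 : a = 1 + 8 * α := by omega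
  have hb2 : b = 4 + 8 * β := by omega
  have hc2 : c = 4 + 8 * γ := by omega
  have hd2 : d = 1 - 8 * α := by omega
  rw [ha2, hb2, hc2, hd2] at hdet
  have key : -64 * (α * α) - 16 - 32 * β - 32 * γ - 64 * (β * γ) = 1 - 1 := by
    linear_combination hdet
  omega
end

section
/- Under the substitution Z₁ ↦ θ_{01}(z)θ_{01}(w), Z₂ ↦ θ_{00}(z)θ_{00}(w), Z₃ ↦ θ_{10}(z)θ_{10}(w), C ↦ θ_{00}(2z)θ_{00}(2w)+θ_{10}(2z)θ_{10}(2w), W₁ ↦ θ_{10}(2z)θ_{00}(2w)+θ_{00}(2z)θ_{10}(2w), W₂ ↦ i(θ_{10}(2z)θ_{00}(2w)−θ_{00}(2z)θ_{10}(2w)), W₃ ↦ θ_{00}(2z)θ_{00}(2w)−θ_{10}(2z)θ_{10}(2w), the four box-variety relations W₁²+W₂² = Z₃², W₁²+W₃² = Z₂², W₂²+W₃² = Z₁², W₁²+W₂²+W₃² = C² hold identically for all z, w in the upper half-plane. -/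
/-!
Each relation is a polynomial identity in `θ₀₀(2z), θ₁₀(2z), θ₀₀(2w), θ₁₀(2w)` and `i² = -1`
once `θ₀₀(z)², θ₀₁(z)², θ₁₀(z)²` are expressed through `θ₀₀(2z), θ₁₀(2z)`.
For `θ_c(z) = ∑ₙ exp(πi (n + c)² z)`, writing `θ_a(z) θ_b(z)` as a series over `(m, n) ∈ ℤ²`
and splitting it by the parity of `m + n`, as `(m, n) = (p + q, p - q)` or `(p + q + 1, p - q)`,
gives `θ_a θ_b (z) = θ_{(a+b)/2} θ_{(a-b)/2} (2z) + θ_{(a+b+1)/2} θ_{(a-b+1)/2} (2z)`,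
because `(p + q + a)² + (p - q + b)² = 2 (p + (a+b)/2)² + 2 (q + (a-b)/2)²`.
As `θ₀₀ = θ_0` and `θ₁₀ = θ_{1/2}`, this yields the formulas for `θ₀₀²` and `θ₁₀²`; the one
for `θ₀₁²` follows from `θ₀₁(z) = θ₀₀(z + 1)`, `θ₀₀(z + 2) = θ₀₀(z)`, `θ₁₀(z + 2) = i θ₁₀(z)`.
-/

open Complex

open Real

lemma range_add_sub_eq_setOf_even :
    Set.range (fun p : ℤ × ℤ => (p.1 + p.2, p.1 - p.2)) = {q | Even (q.1 + q.2)} := by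
  ext ⟨m, n⟩
  simp only [Set.mem_range, Set.mem_ofPred_eq, Prod.exists, Prod.mk.injEq]
  constructor
  · rintro ⟨a, b, rfl, rfl⟩
    exact ⟨a, by ring⟩
  · rintro ⟨k, hk⟩
    exact ⟨k, m - k, by omega, by omega⟩

lemma range_add_add_one_sub_eq_setOf_odd :
    Set.range (fun p : ℤ × ℤ => (p.1 + p.2 + 1, p.1 - p.2)) = {q | Odd (q.1 + q.2)} := by
  ext ⟨m, n⟩
  simp only [Set.mem_range, Set.mem_ofPred_eq, Prod.exists, Prod.mk.injEq]
  constructor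
  · rintro ⟨a, b, rfl, rfl⟩
    exact ⟨a, by ring⟩
  · rintro ⟨k, hk⟩
    exact ⟨k, m - k - 1, by omega, by omega⟩

lemma tsum_mul_tsum_eq_tsum_even_add_tsum_odd {R : Type*} [NormedRing R] [CompleteSpace R]
    {f g : ℤ → R} (hf : Summable (‖f ·‖)) (hg : Summable (‖g ·‖)) :
    (∑' m, f m) * (∑' n, g n) =
      ∑' p : ℤ × ℤ, f (p.1 + p.2) * g (p.1 - p.2) +
        ∑' p : ℤ × ℤ, f (p.1 + p.2 + 1) * g (p.1 - p.2) := by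
  set F : ℤ × ℤ → R := fun q => f q.1 * g q.2
  have hcompl : {q : ℤ × ℤ | Even (q.1 + q.2)}ᶜ = {q | Odd (q.1 + q.2)} := by
    ext q; simp [Int.not_even_iff_odd]
  rw [tsum_mul_tsum_of_summable_norm hf hg,
    ← (summable_mul_of_summable_norm hf hg).tsum_subtype_add_tsum_subtype_compl
      {q | Even (q.1 + q.2)},
    hcompl, ← range_add_sub_eq_setOf_even, ← range_add_add_one_sub_eq_setOf_odd,
    tsum_range F (fun ⟨_, _⟩ ⟨_, _⟩ h => by simp only [Prod.mk.injEq] at h ⊢; omega),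
    tsum_range F (fun ⟨_, _⟩ ⟨_, _⟩ h => by simp only [Prod.mk.injEq] at h ⊢; omega)]

noncomputable def shiftedTheta (c z : ℂ) : ℂ := ∑' n : ℤ, cexp (π * I * (n + c) ^ 2 * z)

lemma summable_norm_shiftedTheta_term (c : ℂ) {z : ℂ} (hz : 0 < z.im) :
    Summable fun n : ℤ => ‖cexp (π * I * (n + c) ^ 2 * z)‖ := by
  have hterm (n : ℤ) : cexp (π * I * (n + c) ^ 2 * z) =
      cexp (π * I * c ^ 2 * z) * jacobiTheta₂_term n (c * z) z := by
    rw [jacobiTheta₂_term, ← Complex.exp_add]; ring_nf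
  simp_rw [hterm, norm_mul]
  exact (summable_norm_iff.mpr ((summable_jacobiTheta₂_term_iff _ _).mpr hz)).mul_left _

lemma shiftedTheta_add_one (c z : ℂ) : shiftedTheta (c + 1) z = shiftedTheta c z := by
  refine (tsum_congr fun n => ?_).trans ((Equiv.addRight (1 : ℤ)).tsum_eq _)
  rw [Equiv.coe_addRight]
  push_cast
  ring_nf

lemma shiftedTheta_mul_shiftedTheta (a b : ℂ) {z : ℂ} (hz : 0 < z.im) :
    shiftedTheta a z * shiftedTheta b z =
      shiftedTheta ((a + b) / 2) (2 * z) * shiftedTheta ((a - b) / 2) (2 * z) +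
        shiftedTheta ((a + b + 1) / 2) (2 * z) * shiftedTheta ((a - b + 1) / 2) (2 * z) := by
  have hz2 : 0 < (2 * z).im := by simpa using hz
  have hexp {m n p q : ℤ} {a b a' b' : ℂ}
      (h : (m + a) ^ 2 + (n + b) ^ 2 = 2 * ((p + a') ^ 2 + (q + b') ^ 2)) :
      cexp (π * I * (m + a) ^ 2 * z) * cexp (π * I * (n + b) ^ 2 * z) =
        cexp (π * I * (p + a') ^ 2 * (2 * z)) * cexp (π * I * (q + b') ^ 2 * (2 * z)) := by
    rw [← Complex.exp_add, ← Complex.exp_add]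
    congr 1
    linear_combination π * I * z * h
  rw [shiftedTheta, shiftedTheta, tsum_mul_tsum_eq_tsum_even_add_tsum_odd
      (summable_norm_shiftedTheta_term a hz) (summable_norm_shiftedTheta_term b hz),
    shiftedTheta, shiftedTheta, shiftedTheta, shiftedTheta,
    tsum_mul_tsum_of_summable_norm (summable_norm_shiftedTheta_term _ hz2)
      (summable_norm_shiftedTheta_term _ hz2),
    tsum_mul_tsum_of_summable_norm (summable_norm_shiftedTheta_term _ hz2)
      (summable_norm_shiftedTheta_term _ hz2)]
  congr 1 <;> refine tsum_congr fun p => hexp ?_ <;> push_cast <;> ring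

lemma theta00_eq_shiftedTheta (z : ℂ) : theta00 z = shiftedTheta 0 z := by
  simp [theta00, shiftedTheta]

lemma theta10_eq_shiftedTheta (z : ℂ) : theta10 z = shiftedTheta (1 / 2) z := rfl

lemma theta00_add_two (z : ℂ) : theta00 (z + 2) = theta00 z := by
  rw [add_comm]; exact jacobiTheta_two_add z

lemma theta10_add_two (z : ℂ) : theta10 (z + 2) = I * theta10 z := by
  rw [theta10, theta10, ← tsum_mul_left]
  refine tsum_congr fun n => ?_
  have hsplit : cexp (π * I * ((n : ℂ) + 1 / 2) ^ 2 * (z + 2)) =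
      cexp ((n ^ 2 + n : ℤ) * (2 * π * I)) * cexp (π / 2 * I) *
        cexp (π * I * ((n : ℂ) + 1 / 2) ^ 2 * z) := by
    rw [← Complex.exp_add, ← Complex.exp_add]
    congr 1
    push_cast
    ring
  rw [hsplit, exp_int_mul_two_pi_mul_I, exp_pi_div_two_mul_I, one_mul]

lemma theta01_eq_theta00_add_one (z : ℂ) : theta01 z = theta00 (z + 1) := by
  refine tsum_congr fun n => ?_
  have hsign : cexp (π * I * n ^ 2) = (-1) ^ n := by
    rw [show (π * I * n ^ 2 : ℂ) = ((n * (n - 1) + n : ℤ) : ℂ) * (π * I) by push_cast; ring,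
      Complex.exp_int_mul, exp_pi_mul_I, zpow_add₀ (by norm_num),
      (Int.even_mul_pred_self n).neg_one_zpow, one_mul]
  rw [← hsign, ← Complex.exp_add]
  congr 1
  ring

lemma theta00_sq {z : ℂ} (hz : 0 < z.im) :
    theta00 z ^ 2 = theta00 (2 * z) ^ 2 + theta10 (2 * z) ^ 2 := by
  simp only [theta00_eq_shiftedTheta, theta10_eq_shiftedTheta, sq,
    shiftedTheta_mul_shiftedTheta 0 0 hz]
  norm_num

lemma theta10_sq {z : ℂ} (hz : 0 < z.im) :
    theta10 z ^ 2 = 2 * theta00 (2 * z) * theta10 (2 * z) := by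
  have h1 : shiftedTheta 1 (2 * z) = shiftedTheta 0 (2 * z) := by
    simpa using shiftedTheta_add_one 0 (2 * z)
  simp only [theta00_eq_shiftedTheta, theta10_eq_shiftedTheta, sq,
    shiftedTheta_mul_shiftedTheta (1 / 2) (1 / 2) hz]
  norm_num [h1]
  ring

lemma theta01_sq {z : ℂ} (hz : 0 < z.im) :
    theta01 z ^ 2 = theta00 (2 * z) ^ 2 - theta10 (2 * z) ^ 2 := by
  have hz1 : 0 < (z + 1).im := by simpa using hz
  rw [theta01_eq_theta00_add_one, theta00_sq hz1, mul_add, mul_one, theta00_add_two,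
    theta10_add_two, mul_pow, I_sq]
  ring

theorem box_relations_theta (z w : ℂ) (hz : 0 < z.im) (hw : 0 < w.im) :
    let Z₁ := theta01 z * theta01 w
    let Z₂ := theta00 z * theta00 w
    let Z₃ := theta10 z * theta10 w
    let C := theta00 (2 * z) * theta00 (2 * w) + theta10 (2 * z) * theta10 (2 * w)
    let W₁ := theta10 (2 * z) * theta00 (2 * w) + theta00 (2 * z) * theta10 (2 * w)
    let W₂ := I * (theta10 (2 * z) * theta00 (2 * w) - theta00 (2 * z) * theta10 (2 * w))
    let W₃ := theta00 (2 * z) * theta00 (2 * w) - theta10 (2 * z) * theta10 (2 * w)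
    W₁ ^ 2 + W₂ ^ 2 = Z₃ ^ 2 ∧ W₁ ^ 2 + W₃ ^ 2 = Z₂ ^ 2 ∧ W₂ ^ 2 + W₃ ^ 2 = Z₁ ^ 2 ∧
      W₁ ^ 2 + W₂ ^ 2 + W₃ ^ 2 = C ^ 2 := by
  intro Z₁ Z₂ Z₃ C W₁ W₂ W₃
  have hW₂ :
      W₂ ^ 2 = -(theta10 (2 * z) * theta00 (2 * w) - theta00 (2 * z) * theta10 (2 * w)) ^ 2 := by
    rw [mul_pow, I_sq, neg_one_mul]
  refine ⟨?_, ?_, ?_, ?_⟩ <;>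
    simp only [hW₂, Z₁, Z₂, Z₃, C, W₁, W₃, mul_pow, theta00_sq hz, theta00_sq hw, theta01_sq hz,
      theta01_sq hw, theta10_sq hz, theta10_sq hw] <;>
    ring
end

section
/- The subgroup Δ(N,N') = {(M₁,M₂) ∈ Γ[N]×Γ[N] : M₁ ≡ M₂ mod N'} of SL(2,ℤ)×SL(2,ℤ) is generated by Γ[N']×Γ[N'] together with the diagonally embedded copy of Γ[N], where N divides N'. -/
open CongruenceSubgroup

/-- Reduction of an integral special linear matrix modulo `N'`. -/
def redMod (N' : ℕ) :
    Matrix.SpecialLinearGroup (Fin 2) ℤ →* Matrix.SpecialLinearGroup (Fin 2) (ZMod N') :=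
  Matrix.SpecialLinearGroup.map (Int.castRingHom (ZMod N'))

/-- `Δ(N,N') = {(M₁,M₂) ∈ Γ[N] × Γ[N] : M₁ ≡ M₂ mod N'}`. -/
def Delta (N N' : ℕ) :
    Subgroup (Matrix.SpecialLinearGroup (Fin 2) ℤ × Matrix.SpecialLinearGroup (Fin 2) ℤ) :=
  ((Gamma N).prod (Gamma N)) ⊓
    MonoidHom.eqLocus ((redMod N').comp (MonoidHom.fst _ _))
      ((redMod N').comp (MonoidHom.snd _ _))

lemma gamma_mono {N N' : ℕ} (h : N ∣ N') : Gamma N' ≤ Gamma N := by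
  intro γ hγ
  rw [Gamma_mem] at hγ ⊢
  obtain ⟨h1, h2, h3, h4⟩ := hγ
  exact ⟨by simpa only [map_intCast, map_one, map_zero] using congrArg (ZMod.castHom h (ZMod N)) h1,
    by simpa only [map_intCast, map_one, map_zero] using congrArg (ZMod.castHom h (ZMod N)) h2,
    by simpa only [map_intCast, map_one, map_zero] using congrArg (ZMod.castHom h (ZMod N)) h3,
    by simpa only [map_intCast, map_one, map_zero] using congrArg (ZMod.castHom h (ZMod N)) h4⟩

theorem delta_generated (N N' : ℕ) (hNN' : N ∣ N') :
    Delta N N' =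
      Subgroup.closure ((((Gamma N').prod (Gamma N')) : Subgroup _) ∪
        ((fun M => (M, M)) '' (Gamma N : Set (Matrix.SpecialLinearGroup (Fin 2) ℤ)))) := by
  apply le_antisymm
  · rintro ⟨M₁, M₂⟩ ⟨⟨h1, h2⟩, heq⟩
    have key : (M₁, M₂) = (M₁ * M₂⁻¹, 1) * (M₂, M₂) := by
      simp [Prod.ext_iff, mul_assoc]
    rw [key]
    apply mul_mem
    · apply Subgroup.subset_closure
      left
      refine ⟨?_, one_mem _⟩
      show redMod N' (M₁ * M₂⁻¹) = 1
      simp only [map_mul, map_inv]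
      rw [show redMod N' M₁ = redMod N' M₂ from heq]
      group
    · exact Subgroup.subset_closure (Or.inr ⟨M₂, h2, rfl⟩)
  · rw [Subgroup.closure_le]
    rintro ⟨A, B⟩ (⟨hA, hB⟩ | ⟨M, hM, hMeq⟩)
    · refine ⟨⟨gamma_mono hNN' hA, gamma_mono hNN' hB⟩, ?_⟩
      show redMod N' A = redMod N' B
      rw [show redMod N' A = 1 from hA, show redMod N' B = 1 from hB]
    · cases hMeq
      exact ⟨⟨hM, hM⟩, rfl⟩
end
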